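/- Let c > 0, L > 1/c, and A, B ∈ ℝ, and define f : ℝ → ℝ by f(z) = A·sin(c z) + B·cos(c z). If ∫₀^L f(z)² dz ≤ 1, then for every z ∈ ℝ one has (f′(z))² ≤ c²·(L/2 − 1/(2c))⁻¹, where f′ denotes the derivative of f. -/

import Mathlib

/-!
With `R² = A² + B²`, both `f′ = c·(A cos(c·) − B sin(c·))` and the oscillating part of
`f² = R²/2 + ((B² − A²) cos(2c·) + 2AB sin(2c·))/2` are sinusoids of amplitude at most `R` resp.
`R²`. Integrating the latter over `[0, L]` costs at most `R²/(2c)`, so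
`R² (L/2 − 1/(2c)) ≤ ∫₀^L f² ≤ 1`, while `f′² ≤ c² R²`.
-/

open Real

theorem sq_mul_sin_add_mul_cos_le (a b x : ℝ) : (a * sin x + b * cos x) ^ 2 ≤ a ^ 2 + b ^ 2 := by
  have hpy := sin_sq_add_cos_sq x
  nlinarith [sq_nonneg (a * cos x - b * sin x)]

theorem deriv_mul_sin_add_mul_cos (A B c z : ℝ) :
    deriv (fun z => A * sin (c * z) + B * cos (c * z)) z
      = c * (-B * sin (c * z) + A * cos (c * z)) := by
  have hcz : HasDerivAt (fun z : ℝ => c * z) c z := by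
    simpa using (hasDerivAt_id z).const_mul c
  have hd : HasDerivAt (fun z => A * sin (c * z) + B * cos (c * z))
      (A * (cos (c * z) * c) + B * (-sin (c * z) * c)) z :=
    (((hasDerivAt_sin (c * z)).comp z hcz).const_mul A).add
      (((hasDerivAt_cos (c * z)).comp z hcz).const_mul B)
  rw [hd.deriv]
  ring

theorem integral_mul_sin_add_mul_cos_sq {c : ℝ} (hc : c ≠ 0) (A B a b : ℝ) :
    ∫ z in a..b, (A * sin (c * z) + B * cos (c * z)) ^ 2
      = (A ^ 2 + B ^ 2) / 2 * (b - a)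
        + ((B ^ 2 - A ^ 2) * sin (2 * c * b) - 2 * A * B * cos (2 * c * b)
          - ((B ^ 2 - A ^ 2) * sin (2 * c * a) - 2 * A * B * cos (2 * c * a))) / (4 * c) := by
  set G : ℝ → ℝ := fun z => (A ^ 2 + B ^ 2) / 2 * z
    + ((B ^ 2 - A ^ 2) * sin (2 * c * z) - 2 * A * B * cos (2 * c * z)) / (4 * c)
  have hG : ∀ x, HasDerivAt G ((A * sin (c * x) + B * cos (c * x)) ^ 2) x := by
    intro x
    have h2c : HasDerivAt (fun z : ℝ => 2 * c * z) (2 * c) x := by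
      simpa using (hasDerivAt_id x).const_mul (2 * c)
    have hG' : HasDerivAt G ((A ^ 2 + B ^ 2) / 2 * 1
        + ((B ^ 2 - A ^ 2) * (cos (2 * c * x) * (2 * c))
          - 2 * A * B * (-sin (2 * c * x) * (2 * c))) / (4 * c)) x :=
      ((hasDerivAt_id x).const_mul ((A ^ 2 + B ^ 2) / 2)).add
      (((((hasDerivAt_sin _).comp x h2c).const_mul (B ^ 2 - A ^ 2)).sub
        (((hasDerivAt_cos _).comp x h2c).const_mul (2 * A * B))).div_const (4 * c))
    convert hG' using 1
    rw [show 2 * c * x = 2 * (c * x) by ring, sin_two_mul, cos_two_mul]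
    field_simp
    linear_combination (8 * A ^ 2) * sin_sq_add_cos_sq (c * x)
  rw [intervalIntegral.integral_eq_sub_of_hasDerivAt (fun x _ => hG x)
    (by apply Continuous.intervalIntegrable; fun_prop)]
  ring

theorem sq_add_sq_mul_le_integral_mul_sin_add_mul_cos_sq {c : ℝ} (hc : 0 < c) (A B a b : ℝ) :
    (A ^ 2 + B ^ 2) * ((b - a) / 2 - 1 / (2 * c))
      ≤ ∫ z in a..b, (A * sin (c * z) + B * cos (c * z)) ^ 2 := by
  rw [integral_mul_sin_add_mul_cos_sq hc.ne']
  have hamp : ∀ x, -(A ^ 2 + B ^ 2) ≤ (B ^ 2 - A ^ 2) * sin x - 2 * A * B * cos x ∧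
      (B ^ 2 - A ^ 2) * sin x - 2 * A * B * cos x ≤ A ^ 2 + B ^ 2 := fun x => by
    refine abs_le_of_sq_le_sq' ?_ (by positivity)
    linear_combination sq_mul_sin_add_mul_cos_le (B ^ 2 - A ^ 2) (-2 * A * B) x
  have hb := (hamp (2 * c * b)).1
  have ha := (hamp (2 * c * a)).2
  have hosc : -(A ^ 2 + B ^ 2) / (2 * c) ≤
      ((B ^ 2 - A ^ 2) * sin (2 * c * b) - 2 * A * B * cos (2 * c * b)
        - ((B ^ 2 - A ^ 2) * sin (2 * c * a) - 2 * A * B * cos (2 * c * a))) / (4 * c) := by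
    rw [div_le_div_iff₀ (by positivity) (by positivity)]
    nlinarith
  calc (A ^ 2 + B ^ 2) * ((b - a) / 2 - 1 / (2 * c))
      = (A ^ 2 + B ^ 2) / 2 * (b - a) + -(A ^ 2 + B ^ 2) / (2 * c) := by ring
    _ ≤ _ := by gcongr

/-- If `f(z) = A·sin(c z) + B·cos(c z)` with `c > 0`, `L > 1/c`, and
`∫₀^L f(z)² dz ≤ 1`, then for every `z ∈ ℝ`,
`(f′(z))² ≤ c²·(L/2 − 1/(2c))⁻¹`. -/
theorem sinusoid_deriv_sup_bound (c L A B : ℝ) (hc : 0 < c) (hL : 1 / c < L)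
    (f : ℝ → ℝ) (hf : ∀ z, f z = A * Real.sin (c * z) + B * Real.cos (c * z))
    (hint : (∫ z in (0 : ℝ)..L, f z ^ 2) ≤ 1) :
    ∀ z : ℝ, deriv f z ^ 2 ≤ c ^ 2 * (L / 2 - 1 / (2 * c))⁻¹ := by
  obtain rfl : f = fun z => A * sin (c * z) + B * cos (c * z) := funext hf
  have hlen : 0 < L / 2 - 1 / (2 * c) := by
    rw [show 1 / (2 * c) = 1 / c / 2 by ring]
    linarith
  have hamp : A ^ 2 + B ^ 2 ≤ (L / 2 - 1 / (2 * c))⁻¹ := by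
    rw [inv_eq_one_div, le_div_iff₀ hlen]
    simpa using (sq_add_sq_mul_le_integral_mul_sin_add_mul_cos_sq hc A B 0 L).trans hint
  intro z
  rw [deriv_mul_sin_add_mul_cos, mul_pow]
  gcongr
  exact (sq_mul_sin_add_mul_cos_le _ _ _).trans (by rwa [neg_sq, add_comm])
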